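/- arXiv:2408.12582 — 4 statements merged into one kernel-verified Lean document; each statement's English description precedes it below -/
import Mathlib

section
/- Let L > 0, μ > 0 be real numbers and let f : ℝ → ℝ be twice differentiable with deriv (deriv f) z = μ^2 · f z for all z, and f(-L) = 0. Then the derivative of f at the interface satisfies deriv f 0 = μ · (cosh(μL)/sinh(μL)) · f(0), i.e. deriv f 0 = μ · coth(μL) · f(0). -/
/-!
`deriv f z * sinh (μ (z - a)) - μ f z * cosh (μ (z - a))` is the Wronskian of `f` with the solution
`sinh (μ (z - a))` of `y'' = μ² y`, hence constant. When `f a = 0` it vanishes at `a`, so it vanishes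
everywhere, and at `z = 0`, `a = -L` this is the claimed relation once divided by `sinh (μ L) ≠ 0`.
-/

open Real

theorem hasDerivAt_deriv_mul_sinh_sub_mul_cosh {f : ℝ → ℝ} {μ a z : ℝ}
    (hf : DifferentiableAt ℝ f z) (hf' : DifferentiableAt ℝ (deriv f) z)
    (hode : deriv (deriv f) z = μ ^ 2 * f z) :
    HasDerivAt (fun x => deriv f x * sinh (μ * (x - a)) - μ * f x * cosh (μ * (x - a))) 0 z := by
  have hlin : HasDerivAt (fun x : ℝ => μ * (x - a)) μ z := by
    simpa using ((hasDerivAt_id z).sub_const a).const_mul μ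
  have hsinh := (hasDerivAt_sinh _).comp z hlin
  have hcosh := (hasDerivAt_cosh _).comp z hlin
  have hf'' : HasDerivAt (deriv f) (μ ^ 2 * f z) z := hode ▸ hf'.hasDerivAt
  exact ((hf''.mul hsinh).sub ((hf.hasDerivAt.const_mul μ).mul hcosh)).congr_deriv
    (by simp only [Function.comp_apply]; ring)

theorem deriv_mul_sinh_eq_mul_cosh_of_eq_zero {f : ℝ → ℝ} {μ a : ℝ}
    (hf : Differentiable ℝ f) (hf' : Differentiable ℝ (deriv f))
    (hode : ∀ z, deriv (deriv f) z = μ ^ 2 * f z) (ha : f a = 0) (z : ℝ) :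
    deriv f z * sinh (μ * (z - a)) = μ * f z * cosh (μ * (z - a)) := by
  have hW := fun x => hasDerivAt_deriv_mul_sinh_sub_mul_cosh (a := a) (hf x) (hf' x) (hode x)
  have hconst := is_const_of_deriv_eq_zero (fun x => (hW x).differentiableAt)
    (fun x => (hW x).deriv) z a
  simpa [ha, sub_eq_zero] using hconst

theorem stmt_1 (L μ : ℝ) (hL : 0 < L) (hμ : 0 < μ) (f : ℝ → ℝ)
    (hf1 : Differentiable ℝ f) (hf2 : Differentiable ℝ (deriv f))
    (hode : ∀ z : ℝ, deriv (deriv f) z = μ ^ 2 * f z)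
    (hbc : f (-L) = 0) :
    deriv f 0 = μ * (Real.cosh (μ * L) / Real.sinh (μ * L)) * f 0 := by
  have hsinh : sinh (μ * L) ≠ 0 := (sinh_pos_iff.mpr (mul_pos hμ hL)).ne'
  have hW := deriv_mul_sinh_eq_mul_cosh_of_eq_zero hf1 hf2 hode hbc 0
  rw [zero_sub, neg_neg] at hW
  field_simp
  linarith
end

section
/- Let c, K, L, s > 0 and ω ∈ ℝ, and set μ = √(cs/K). Suppose e₂ : ℝ → ℝ is twice differentiable with K · deriv (deriv e₂) z = c·s·e₂ z for all z, e₂(−L) = 0 and e₂(0) = γ, where γ ∈ ℝ. Define e₁ = −(K/s) · deriv e₂ 0 and γ' = ω·e₁ + (1−ω)·γ. Then γ' = ρ(s,ω) · γ, where ρ(s,ω) = 1 − ω − ω·√(cK/s)·coth(√(cs/K)·L). -/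
/-!
Write `μ = √(cs/K)`, so that the error satisfies `e₂'' = μ² e₂`. The Wronskian of two solutions
of `f'' = q f` is constant; pairing `e₂` with `u z = sinh (μ (z + L))`, which also vanishes at `-L`,
makes it vanish identically, and evaluated at `0` it gives `e₂'(0) sinh (μL) = μ γ cosh (μL)`.
Since `√(cK/s) = (K/s) μ`, the relaxation step is then multiplication by `ρ(s, ω)`.
-/

open Real

theorem wronskian_eq_of_hasDerivAt {f f' g g' q : ℝ → ℝ}
    (hf : ∀ x, HasDerivAt f (f' x) x) (hf' : ∀ x, HasDerivAt f' (q x * f x) x)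
    (hg : ∀ x, HasDerivAt g (g' x) x) (hg' : ∀ x, HasDerivAt g' (q x * g x) x) (x y : ℝ) :
    f' x * g x - f x * g' x = f' y * g y - f y * g' y := by
  have hW : ∀ z, HasDerivAt (fun z => f' z * g z - f z * g' z) 0 z := fun z =>
    (((hf' z).mul (hg z)).sub ((hf z).mul (hg' z))).congr_deriv (by ring)
  exact is_const_of_deriv_eq_zero (fun z => (hW z).differentiableAt) (fun z => (hW z).deriv) x y

theorem hasDerivAt_sinh_mul_add (μ L x : ℝ) :
    HasDerivAt (fun z => sinh (μ * (z + L))) (μ * cosh (μ * (x + L))) x :=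
  (((hasDerivAt_id x).add_const L).const_mul μ).sinh.congr_deriv (by simp only [id]; ring)

theorem hasDerivAt_mul_cosh_mul_add (μ L x : ℝ) :
    HasDerivAt (fun z => μ * cosh (μ * (z + L))) (μ ^ 2 * sinh (μ * (x + L))) x :=
  ((((hasDerivAt_id x).add_const L).const_mul μ).cosh.const_mul μ).congr_deriv
    (by simp only [id]; ring)

theorem deriv_mul_sinh_eq_of_deriv_deriv_eq {e : ℝ → ℝ} {μ L : ℝ} (h1 : Differentiable ℝ e)
    (h2 : Differentiable ℝ (deriv e)) (hode : ∀ z, deriv (deriv e) z = μ ^ 2 * e z)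
    (hbot : e (-L) = 0) :
    deriv e 0 * sinh (μ * L) = μ * e 0 * cosh (μ * L) := by
  have hW := wronskian_eq_of_hasDerivAt (q := fun _ => μ ^ 2) (fun x => (h1 x).hasDerivAt)
    (fun x => (h2 x).hasDerivAt.congr_deriv (hode x)) (hasDerivAt_sinh_mul_add μ L)
    (hasDerivAt_mul_cosh_mul_add μ L) 0 (-L)
  simp only [zero_add, neg_add_cancel, mul_zero, sinh_zero, hbot] at hW
  linarith

theorem stmt_2 (c K L s ω γ : ℝ) (hc : 0 < c) (hK : 0 < K) (hL : 0 < L) (hs : 0 < s)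
    (e₂ : ℝ → ℝ) (h1 : Differentiable ℝ e₂) (h2 : Differentiable ℝ (deriv e₂))
    (hode : ∀ z : ℝ, K * deriv (deriv e₂) z = c * s * e₂ z)
    (hbot : e₂ (-L) = 0) (htop : e₂ 0 = γ)
    (e₁ γ' : ℝ) (he₁ : e₁ = -(K / s) * deriv e₂ 0)
    (hγ' : γ' = ω * e₁ + (1 - ω) * γ) :
    γ' = (1 - ω - ω * Real.sqrt (c * K / s) *
        (Real.cosh (Real.sqrt (c * s / K) * L) / Real.sinh (Real.sqrt (c * s / K) * L))) * γ := by
  set μ := √(c * s / K) with hμ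
  have hμ_pos : 0 < μ := sqrt_pos.mpr (by positivity)
  have hμ_sq : μ ^ 2 = c * s / K := sq_sqrt (by positivity)
  have hode' : ∀ z, deriv (deriv e₂) z = μ ^ 2 * e₂ z := fun z => by
    rw [hμ_sq]
    field_simp
    linarith [hode z]
  have hflux := deriv_mul_sinh_eq_of_deriv_deriv_eq h1 h2 hode' hbot
  have hsinh : sinh (μ * L) ≠ 0 := (sinh_pos_iff.mpr (by positivity)).ne'
  have hsqrt : √(c * K / s) = K / s * μ := by
    rw [hμ, ← sqrt_sq (by positivity : (0 : ℝ) ≤ K / s), ← sqrt_mul (by positivity)]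
    congr 1
    field_simp
  rw [hγ', he₁, hsqrt, ← htop]
  field_simp
  linear_combination (-(ω * K)) * hflux
end

section
/- Let c, K, L, s > 0 and define ρ(s,ω) = 1 − ω − ω·√(cK/s)·coth(√(cs/K)·L) and ω_opt(s) = 1 / (1 + √(cK/s)·coth(√(cs/K)·L)). Then ω_opt(s) lies in the open interval (0, 1) and ρ(s, ω_opt(s)) = 0; moreover ω_opt(s) is the unique real ω with ρ(s,ω) = 0. -/
open Real

lemma cosh_div_sinh_pos {x : ℝ} (hx : 0 < x) : 0 < cosh x / sinh x :=
  div_pos (cosh_pos x) (sinh_pos_iff.mpr hx)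

lemma one_div_mem_Ioo_of_one_lt {α : Type*} [Field α] [LinearOrder α] [IsStrictOrderedRing α]
    {D : α} (hD : 1 < D) : 1 / D ∈ Set.Ioo (0 : α) 1 :=
  ⟨one_div_pos.mpr (zero_lt_one.trans hD), (div_lt_one (zero_lt_one.trans hD)).mpr hD⟩

lemma one_sub_mul_eq_zero_iff_eq_one_div {α : Type*} [DivisionRing α] {D ω : α} (hD : D ≠ 0) :
    1 - ω * D = 0 ↔ ω = 1 / D := by
  rw [sub_eq_zero, eq_div_iff hD, eq_comm]

theorem stmt_3 (c K L s : ℝ) (hc : 0 < c) (hK : 0 < K) (hL : 0 < L) (hs : 0 < s) :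
    let coth : ℝ → ℝ := fun x => Real.cosh x / Real.sinh x
    let ρ : ℝ → ℝ := fun ω =>
      1 - ω - ω * Real.sqrt (c * K / s) * coth (Real.sqrt (c * s / K) * L)
    let ωopt : ℝ := 1 / (1 + Real.sqrt (c * K / s) * coth (Real.sqrt (c * s / K) * L))
    ωopt ∈ Set.Ioo (0 : ℝ) 1 ∧ ρ ωopt = 0 ∧ ∀ ω : ℝ, ρ ω = 0 → ω = ωopt := by
  intro coth ρ ωopt
  set D := 1 + √(c * K / s) * coth (√(c * s / K) * L)
  have hD : 1 < D := lt_add_of_pos_right 1 <|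
    mul_pos (sqrt_pos.mpr (by positivity))
      (cosh_div_sinh_pos (mul_pos (sqrt_pos.mpr (by positivity)) hL))
  have hρ (ω : ℝ) : ρ ω = 1 - ω * D := by simp only [ρ, D]; ring
  have hρ_eq_zero (ω : ℝ) : ρ ω = 0 ↔ ω = ωopt := by
    rw [hρ, one_sub_mul_eq_zero_iff_eq_one_div (zero_lt_one.trans hD).ne']
  exact ⟨one_div_mem_Ioo_of_one_lt hD, (hρ_eq_zero ωopt).mpr rfl, fun ω => (hρ_eq_zero ω).mp⟩
end

section
/- Let c, K, Δt, L > 0, let M ≥ 2 be a natural number, set Δz = L/M, a = (2/3)·c·Δz + 2·K·Δt/Δz, b = (1/6)·c·Δz − K·Δt/Δz, and let T be the (M−1)×(M−1) symmetric tridiagonal Toeplitz matrix with diagonal a and off-diagonal b. Let u ∈ ℝ^{M−1} be the vector (0, …, 0, b)ᵀ. Then the scalar S := uᵀ · T⁻¹ · u − a/2 satisfies S = b²·α − a/2, where α = (Δz/L) · ∑_{j=1}^{M−1} sin²(j·π·Δz/L) / ((a/2) − b·cos(j·π·Δz/L)). -/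
/-!
The sine vectors `p ↦ sin (p θⱼ)`, `θⱼ = jπ/M`, `1 ≤ j ≤ M - 1`, are eigenvectors of the symmetric
tridiagonal Toeplitz matrix `T` with eigenvalues `a + 2b cos θⱼ` (the three-term recurrence
`sin ((p-1)θ) + sin ((p+1)θ) = 2 cos θ sin (pθ)`, with `sin (0 θⱼ) = sin (M θⱼ) = 0` supplying the
boundary rows), and they are orthogonal with squared norm `M/2`. Hence
`T⁻¹ = (2/M) ∑ⱼ (a + 2b cos θⱼ)⁻¹ vⱼ vⱼᵀ`, all eigenvalues being positive as `a > 2|b|`. As `u = b e_{M-1}`,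
`uᵀ T⁻¹ u = b² (T⁻¹)_{M-1,M-1}`; finally `sin² ((M-1)θⱼ) = sin² θⱼ`, and the reflection `j ↦ M - j`
turns `cos θⱼ` into `-cos θⱼ`, which gives `α`.
-/

open Real Finset Matrix

theorem Matrix.inv_eq_sum_smul_vecMulVec {m ι R : Type*} [Fintype m] [DecidableEq m] [Fintype ι]
    [Field R] (A : Matrix m m R) (v w : ι → m → R) (μ c : ι → R)
    (hv : ∀ j, A *ᵥ v j = μ j • v j) (hμ : ∀ j, μ j ≠ 0)
    (hc : ∑ j, c j • vecMulVec (v j) (w j) = 1) :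
    A⁻¹ = ∑ j, (c j / μ j) • vecMulVec (v j) (w j) := by
  refine inv_eq_right_inv ?_
  rw [Finset.mul_sum, ← hc]
  refine Finset.sum_congr rfl fun j _ => ?_
  rw [Matrix.mul_smul, mul_vecMulVec, hv, smul_vecMulVec, smul_smul, div_mul_cancel₀ _ (hμ j)]

theorem Real.sum_range_cos_succ_mul (n : ℕ) {x : ℝ} (hx : sin (x / 2) ≠ 0) :
    ∑ j ∈ range n, cos ((j + 1) * x) =
      (sin ((n + 1 / 2) * x) - sin (x / 2)) / (2 * sin (x / 2)) := by
  have telescope (j : ℕ) : cos ((j + 1) * x) * (2 * sin (x / 2)) =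
      sin (((j + 1 : ℕ) + 1 / 2) * x) - sin ((j + 1 / 2) * x) := by
    rw [mul_comm, two_mul_sin_mul_cos, ← neg_sub, sin_neg]
    push_cast
    ring_nf
  rw [eq_div_iff (mul_ne_zero two_ne_zero hx), sum_mul]
  simp_rw [telescope]
  rw [sum_range_sub (fun j : ℕ => sin ((j + 1 / 2) * x))]
  norm_num [div_eq_inv_mul]

theorem Real.sin_int_mul_pi_div_ne_zero {m : ℤ} {N : ℝ} (hm : m ≠ 0) (hmN : |(m : ℝ)| < N) :
    sin (m * π / N) ≠ 0 := by
  have hN : 0 < N := (abs_nonneg _).trans_lt hmN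
  obtain ⟨h₁, h₂⟩ := abs_lt.mp hmN
  rw [Ne, sin_eq_zero_iff_of_lt_of_lt]
  · simp [hm, pi_ne_zero, hN.ne']
  · rw [lt_div_iff₀ hN]; nlinarith [pi_pos]
  · rw [div_lt_iff₀ hN]; nlinarith [pi_pos]

theorem Real.sum_range_cos_succ_mul_int_mul_pi_div (n : ℕ) {m : ℤ}
    (hm : sin (m * π / ((n + 1) * 2)) ≠ 0) :
    ∑ j ∈ range n, cos ((j + 1) * (m * π / (n + 1))) = -(1 + cos (m * π)) / 2 := by
  rw [← div_div] at hm
  have hangle : (n + 1 / 2) * (m * π / (n + 1)) = m * π - m * π / (n + 1) / 2 := by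
    field_simp; ring
  rw [sum_range_cos_succ_mul n hm, hangle, sin_sub, sin_int_mul_pi]
  generalize m * π / (n + 1) / 2 = y at hm ⊢
  field_simp
  ring

-- `Fin n` is 0-based: mode `j` has frequency `j + 1`, and entry `p` sits at grid point `p + 1`.
noncomputable def sineFreq (n : ℕ) (j : Fin n) : ℝ := (j + 1) * π / (n + 1)

noncomputable def sineMode (n : ℕ) (j : Fin n) : Fin n → ℝ := fun p => sin ((p + 1) * sineFreq n j)

theorem sum_sineMode_mul_sineMode (n : ℕ) (p k : Fin n) :
    ∑ j : Fin n, sineMode n j p * sineMode n j k = if p = k then ((n : ℝ) + 1) / 2 else 0 := by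
  have product_to_sum (j : ℕ) :
      sin ((p + 1) * ((j + 1) * π / (n + 1))) * sin ((k + 1) * ((j + 1) * π / (n + 1))) =
        (cos ((j + 1) * (((p - k : ℤ) : ℝ) * π / (n + 1))) -
          cos ((j + 1) * (((p + k + 2 : ℤ) : ℝ) * π / (n + 1)))) / 2 := by
    rw [eq_div_iff two_ne_zero, mul_comm, ← mul_assoc, two_mul_sin_mul_sin]
    push_cast
    ring_nf
  have hp : ((p : ℕ) : ℝ) + 1 ≤ n := by exact_mod_cast p.isLt
  have hk : ((k : ℕ) : ℝ) + 1 ≤ n := by exact_mod_cast k.isLt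
  have hsum : ∑ j ∈ range n, cos ((j + 1) * (((p + k + 2 : ℤ) : ℝ) * π / (n + 1))) =
      -(1 + cos (((p + k + 2 : ℤ) : ℝ) * π)) / 2 := by
    refine sum_range_cos_succ_mul_int_mul_pi_div n (sin_int_mul_pi_div_ne_zero (by omega) ?_)
    rw [abs_of_nonneg (by positivity)]
    push_cast
    linarith
  simp only [sineMode, sineFreq]
  rw [Fin.sum_univ_eq_sum_range (fun j => sin ((p + 1) * ((j + 1) * π / (n + 1))) *
    sin ((k + 1) * ((j + 1) * π / (n + 1)))) n]
  simp_rw [product_to_sum]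
  rw [← sum_div, sum_sub_distrib, hsum]
  split_ifs with hpk
  · subst hpk
    have hcos : cos (((p + p + 2 : ℤ) : ℝ) * π) = 1 := by
      rw [show (((p + p + 2 : ℤ) : ℝ) * π) = ((p + 1 : ℕ) : ℝ) * (2 * π) by push_cast; ring]
      exact cos_nat_mul_two_pi _
    rw [hcos]
    simp
  · have hne : ((p : ℤ) - k) ≠ 0 := by omega
    rw [sum_range_cos_succ_mul_int_mul_pi_div n (sin_int_mul_pi_div_ne_zero hne ?_)]
    · rw [show (((p + k + 2 : ℤ) : ℝ) * π) = ((p - k : ℤ) : ℝ) * π + ((k + 1 : ℕ) : ℝ) * (2 * π) by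
        push_cast; ring, cos_add_nat_mul_two_pi]
      ring
    · rw [abs_lt]
      push_cast
      constructor <;> linarith

theorem sum_smul_vecMulVec_sineMode (n : ℕ) :
    ∑ j : Fin n, (2 / (n + 1) : ℝ) • vecMulVec (sineMode n j) (sineMode n j) = 1 := by
  refine Matrix.ext fun p k => ?_
  simp only [Matrix.sum_apply, Matrix.smul_apply, vecMulVec_apply, smul_eq_mul]
  rw [← mul_sum, sum_sineMode_mul_sineMode, one_apply]
  split_ifs
  · field_simp
  · exact mul_zero _

theorem sineFreq_rev (n : ℕ) (j : Fin n) : sineFreq n j.rev = π - sineFreq n j := by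
  have hj : (j : ℕ) + 1 ≤ n := j.isLt
  rw [sineFreq, sineFreq, Fin.val_rev, Nat.cast_sub hj]
  field_simp
  push_cast
  ring

theorem sin_mul_sineFreq_sq (n : ℕ) (j : Fin n) :
    sin (n * sineFreq n j) ^ 2 = sin (sineFreq n j) ^ 2 := by
  have hangle : n * sineFreq n j = ((j + 1 : ℕ) : ℝ) * π - sineFreq n j := by
    rw [sineFreq]
    field_simp
    push_cast
    ring
  rw [hangle, sin_nat_mul_pi_sub, neg_sq, mul_pow, ← pow_mul, pow_mul', neg_one_sq, one_pow, one_mul]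

theorem sum_sineFreq_eq_sum_Icc (n : ℕ) (g : ℝ → ℝ) :
    ∑ j : Fin n, g (sineFreq n j) = ∑ j ∈ Icc 1 n, g (j * π / (n + 1)) := by
  rw [← Ico_add_one_right_eq_Icc, sum_Ico_eq_sum_range, add_tsub_cancel_right,
    ← Fin.sum_univ_eq_sum_range (fun j => g ((1 + j : ℕ) * π / (n + 1)))]
  simp [sineFreq, add_comm]

def tridiag {R : Type*} [Zero R] (n : ℕ) (a b : R) : Matrix (Fin n) (Fin n) R :=
  Matrix.of fun i k =>
    if (i : ℕ) = (k : ℕ) then a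
    else if (i : ℕ) = (k : ℕ) + 1 ∨ (k : ℕ) = (i : ℕ) + 1 then b else 0

theorem tridiag_mulVec_apply {R : Type*} [Semiring R] (n : ℕ) (a b : R) (f : ℕ → R)
    (hf₀ : f 0 = 0) (hfn : f (n + 1) = 0) (i : Fin n) :
    (tridiag n a b *ᵥ fun p => f (p + 1)) i = b * f i + a * f (i + 1) + b * f (i + 2) := by
  obtain ⟨i, hi⟩ := i
  simp only [mulVec, dotProduct, tridiag, of_apply]
  rw [Fin.sum_univ_eq_sum_range (fun q => (if i = q then a
    else if i = q + 1 ∨ q = i + 1 then b else 0) * f (q + 1)) n]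
  have split (q : ℕ) : (if i = q then a else if i = q + 1 ∨ q = i + 1 then b else 0) * f (q + 1) =
      (if q + 1 = i then b * f i else 0) + (if q = i then a * f (i + 1) else 0) +
        (if q = i + 1 then b * f (i + 2) else 0) := by
    split_ifs <;> first | omega | (subst_vars; simp)
  simp_rw [split, sum_add_distrib, sum_ite_eq', mem_range, if_pos hi]
  congr 2
  · cases i with
    | zero => simp [hf₀]
    | succ i => simp [sum_ite_eq', show i < n by omega]
  · split_ifs with h
    · rfl
    · rw [show i + 2 = n + 1 by omega, hfn, mul_zero]

theorem tridiag_mulVec_sin (n : ℕ) (a b : ℝ) {θ : ℝ} (hθ : sin ((n + 1) * θ) = 0) :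
    (tridiag n a b *ᵥ fun p : Fin n => sin ((p + 1) * θ)) =
      (a + 2 * b * cos θ) • fun p : Fin n => sin ((p + 1) * θ) := by
  ext i
  have h := tridiag_mulVec_apply n a b (fun q => sin (q * θ)) (by simp) (by exact_mod_cast hθ) i
  push_cast at h
  rw [h, Pi.smul_apply, smul_eq_mul,
    show (i + 2 : ℝ) * θ = (i + 1) * θ + θ by ring, show (i : ℝ) * θ = (i + 1) * θ - θ by ring,
    sin_add, sin_sub]
  ring

theorem tridiag_mulVec_sineMode (n : ℕ) (a b : ℝ) (j : Fin n) :
    tridiag n a b *ᵥ sineMode n j = (a + 2 * b * cos (sineFreq n j)) • sineMode n j := by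
  refine tridiag_mulVec_sin n a b ?_
  rw [sineFreq, mul_div_cancel₀ _ (by positivity)]
  exact_mod_cast sin_nat_mul_pi (j + 1)

theorem add_two_mul_mul_cos_pos {a b : ℝ} (hab : 2 * |b| < a) (θ : ℝ) : 0 < a + 2 * b * cos θ := by
  have : |2 * b * cos θ| ≤ 2 * |b| := by
    rw [abs_mul, abs_mul, abs_two]
    exact mul_le_of_le_one_right (by positivity) (abs_cos_le_one θ)
  linarith [neg_abs_le (2 * b * cos θ)]

theorem tridiag_inv (n : ℕ) {a b : ℝ} (hab : 2 * |b| < a) :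
    (tridiag n a b)⁻¹ = ∑ j : Fin n,
      (2 / (n + 1) / (a + 2 * b * cos (sineFreq n j))) • vecMulVec (sineMode n j) (sineMode n j) :=
  inv_eq_sum_smul_vecMulVec _ _ _ _ _ (tridiag_mulVec_sineMode n a b)
    (fun _ => (add_two_mul_mul_cos_pos hab _).ne') (sum_smul_vecMulVec_sineMode n)

theorem tridiag_inv_apply_self_of_succ_eq (n : ℕ) {a b : ℝ} (hab : 2 * |b| < a) (i : Fin n)
    (hi : (i : ℕ) + 1 = n) :
    (tridiag n a b)⁻¹ i i =
      1 / (n + 1) * ∑ j : Fin n, sin (sineFreq n j) ^ 2 / (a / 2 - b * cos (sineFreq n j)) := by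
  rw [tridiag_inv n hab, Matrix.sum_apply, mul_sum]
  refine Fintype.sum_equiv Fin.revPerm _ _ fun j => ?_
  have hpos := add_two_mul_mul_cos_pos hab (sineFreq n j)
  have hi' : ((i : ℕ) : ℝ) + 1 = n := by exact_mod_cast hi
  rw [Fin.revPerm_apply, sineFreq_rev, sin_pi_sub, cos_pi_sub, Matrix.smul_apply, vecMulVec_apply,
    smul_eq_mul, ← sq, sineMode, hi', sin_mul_sineFreq_sq,
    show a / 2 - b * -cos (sineFreq n j) = (a + 2 * b * cos (sineFreq n j)) / 2 by ring]
  field_simp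

theorem stmt_12 (c K Δt L : ℝ) (hc : 0 < c) (hK : 0 < K) (hΔt : 0 < Δt) (hL : 0 < L)
    (M : ℕ) (hM : 2 ≤ M) :
    let Δz : ℝ := L / M
    let a : ℝ := 2 / 3 * c * Δz + 2 * K * Δt / Δz
    let b : ℝ := 1 / 6 * c * Δz - K * Δt / Δz
    let T : Matrix (Fin (M - 1)) (Fin (M - 1)) ℝ := Matrix.of fun i k =>
      if (i : ℕ) = (k : ℕ) then a
      else if (i : ℕ) = (k : ℕ) + 1 ∨ (k : ℕ) = (i : ℕ) + 1 then b else 0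
    let u : Fin (M - 1) → ℝ := fun i => if (i : ℕ) = M - 2 then b else 0
    let α : ℝ := Δz / L * ∑ j ∈ Finset.Icc 1 (M - 1),
      Real.sin ((j : ℝ) * Real.pi * Δz / L) ^ 2 /
        (a / 2 - b * Real.cos ((j : ℝ) * Real.pi * Δz / L))
    dotProduct u (T⁻¹.mulVec u) - a / 2 = b ^ 2 * α - a / 2 := by
  intro Δz a b T u α
  have hMn : (M : ℝ) = ((M - 1 : ℕ) : ℝ) + 1 := by rw [Nat.cast_sub (by omega)]; ring
  have hΔz : 0 < Δz := div_pos hL (by positivity)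
  have hKΔt : 0 < K * Δt / Δz := by positivity
  have hab : 2 * |b| < a := by
    have h₁ : a - 2 * b = 1 / 3 * c * Δz + 4 * (K * Δt / Δz) := by ring
    have h₂ : a + 2 * b = c * Δz := by ring
    rw [← abs_two, ← abs_mul, abs_lt]
    constructor <;> linarith [mul_pos hc hΔz]
  let last : Fin (M - 1) := ⟨M - 2, by omega⟩
  have hu : u = Pi.single last b := by
    funext k
    simp [u, Pi.single_apply, Fin.ext_iff, last]
  have hα : α = 1 / ((M - 1 : ℕ) + 1) * ∑ j ∈ Icc 1 (M - 1),
      sin (j * π / ((M - 1 : ℕ) + 1)) ^ 2 / (a / 2 - b * cos (j * π / ((M - 1 : ℕ) + 1))) := by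
    have hangle (j : ℕ) : (j : ℝ) * π * Δz / L = j * π / ((M - 1 : ℕ) + 1) := by
      simp only [Δz]
      rw [hMn]
      field_simp
    simp only [α, hangle]
    congr 1
    simp only [Δz]
    rw [hMn]
    field_simp
  rw [hu, show T = tridiag (M - 1) a b from rfl]
  simp only [mulVec_single, op_smul_eq_smul, dotProduct_smul, single_dotProduct, col_apply,
    smul_eq_mul, sub_left_inj]
  rw [tridiag_inv_apply_self_of_succ_eq (M - 1) hab last (show M - 2 + 1 = M - 1 by omega), hα,
    ← sum_sineFreq_eq_sum_Icc (M - 1) fun θ => sin θ ^ 2 / (a / 2 - b * cos θ)]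
  ring
end
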